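/- Let t ≥ 2 be an integer and let M be the t×t integer matrix (rows and columns indexed 1,…,t) with entries M_{i,j} = binom(2, 2+i−j) for 1 ≤ i ≤ t−2, M_{t−1,j} = binom(t+2, t+2−j), and M_{t,j} = binom(t+2, t+1−j). Then det M = −t²(t+3) if t is even, and det M = (t+2)²(t−1) if t is odd. -/
import Mathlib


/-- Binomial coefficient `binom(n, k)` for an integer `k`, with the convention
that it is `0` whenever `k < 0` or `k > n`. -/
def zchoose (n : ℕ) (k : ℤ) : ℤ := if 0 ≤ k then (n.choose k.toNat : ℤ) else 0

lemma zchoose_neg (n : ℕ) {k : ℤ} (h : k < 0) : zchoose n k = 0 := by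
  simp [zchoose, not_le.mpr h]

lemma zchoose_coe (n k : ℕ) : zchoose n (k : ℤ) = n.choose k := by
  simp [zchoose]

lemma zchoose_pascal (N : ℕ) (k : ℤ) :
    zchoose (N + 1) k = zchoose N k + zchoose N (k - 1) := by
  rcases lt_trichotomy k 0 with h | h | h
  · rw [zchoose_neg _ h, zchoose_neg _ h, zchoose_neg _ (by omega)]; ring
  · subst h; simp [zchoose]
  · obtain ⟨a, rfl⟩ : ∃ a : ℕ, k = (a : ℤ) + 1 := ⟨(k - 1).toNat, by omega⟩
    unfold zchoose
    rw [if_pos (by omega), if_pos (by omega), if_pos (by omega)]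
    have h1 : ((a : ℤ) + 1).toNat = a + 1 := by omega
    have h2 : ((a : ℤ) + 1 - 1).toNat = a := by omega
    rw [h1, h2, Nat.choose_succ_succ]
    push_cast; ring

lemma T_eq (N : ℕ) (r : ℤ) (j : ℕ) :
    ∑ m ∈ Finset.range (j + 1), (-1 : ℤ) ^ (j + m) * zchoose (N + 1) (r - m)
      = (-1) ^ j * zchoose N r + zchoose N (r - j - 1) := by
  induction j with
  | zero => simpa using zchoose_pascal N r
  | succ j ih =>
    rw [Finset.sum_range_succ]
    have h1 : ∀ m ∈ Finset.range (j + 1), (-1 : ℤ) ^ (j + 1 + m) * zchoose (N + 1) (r - m)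
        = -((-1 : ℤ) ^ (j + m) * zchoose (N + 1) (r - m)) := by
      intro m _
      rw [show j + 1 + m = (j + m) + 1 by ring, pow_succ]; ring
    rw [Finset.sum_congr rfl h1, Finset.sum_neg_distrib, ih]
    have h2 : ((-1 : ℤ)) ^ (j + 1 + (j + 1)) = 1 := Even.neg_one_pow ⟨j + 1, by ring⟩
    have h3 : r - ((j : ℤ) + 1) = r - j - 1 := by ring
    have h4 : zchoose (N + 1) (r - (j + 1 : ℕ)) = zchoose N (r - j - 1) + zchoose N (r - j - 1 - 1) := by
      push_cast
      rw [h3] at *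
      rw [zchoose_pascal]
    rw [h2, h4]
    push_cast
    rw [pow_succ]
    ring_nf

lemma S_eq (N : ℕ) (r : ℤ) (j : ℕ) :
    ∑ m ∈ Finset.range (j + 1), (-1 : ℤ) ^ (j + m) * ((j : ℤ) - m + 1) * zchoose (N + 2) (r - m)
      = (-1) ^ j * ((j : ℤ) + 1) * zchoose (N + 1) r + (-1) ^ j * zchoose N (r - 1)
        + zchoose N (r - j - 2) := by
  induction j with
  | zero =>
    simp only [zero_add, Finset.sum_range_one, Nat.cast_zero, pow_zero]
    have p1 := zchoose_pascal (N + 1) r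
    have p2 := zchoose_pascal N (r - 1)
    rw [show r - (0:ℤ) - 2 = r - 1 - 1 by ring, show r - (0:ℤ) = r by ring]
    linear_combination p1 + p2
  | succ j ih =>
    have h1 : ∀ m ∈ Finset.range (j + 2), (-1 : ℤ) ^ (j + 1 + m) * ((j + 1 : ℕ) - m + 1 : ℤ) * zchoose (N + 2) (r - m)
        = -((-1 : ℤ) ^ (j + m) * ((j : ℤ) - m + 1) * zchoose (N + 2) (r - m))
          + (-1 : ℤ) ^ (j + 1 + m) * zchoose ((N + 1) + 1) (r - m) := by
      intro m _
      rw [show j + 1 + m = (j + m) + 1 by ring, pow_succ]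
      push_cast
      ring
    rw [Finset.sum_congr rfl h1, Finset.sum_add_distrib, Finset.sum_neg_distrib,
      Finset.sum_range_succ (fun m => (-1 : ℤ) ^ (j + m) * ((j : ℤ) - m + 1) * zchoose (N + 2) (r - m)),
      ih, T_eq (N + 1) r (j + 1)]
    have p := zchoose_pascal N (r - (j:ℤ) - 2)
    have e1 : r - ((j:ℤ) + 1) - 1 = r - (j:ℤ) - 2 := by ring
    have e2 : r - ((j:ℤ) + 1) - 2 = r - (j:ℤ) - 2 - 1 := by ring
    push_cast
    rw [e1, e2, pow_succ]
    linear_combination p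

lemma zchoose_eq_zero_of_lt {n : ℕ} {k : ℤ} (h : (n : ℤ) < k) : zchoose n k = 0 := by
  unfold zchoose
  rw [if_pos (by omega)]
  rw [Nat.choose_eq_zero_of_lt (by omega)]
  simp

lemma zchoose_self (n : ℕ) : zchoose n (n : ℤ) = 1 := by
  rw [zchoose_coe, Nat.choose_self, Nat.cast_one]

lemma zchoose_zero_right (n : ℕ) : zchoose n 0 = 1 := by
  simpa using zchoose_coe n 0

lemma zchoose_one_right (n : ℕ) : zchoose n 1 = n := by
  simpa using zchoose_coe n 1

lemma zchoose_succ_self (n : ℕ) : zchoose (n + 1) (n : ℤ) = n + 1 := by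
  rw [zchoose_coe, Nat.choose_succ_self_right]; push_cast; ring

section aux

variable (n : ℕ)

theorem aux (A : Matrix (Fin (n + 2)) (Fin (n + 2)) ℤ)
    (hA : ∀ i j : Fin (n + 2), A i j =
      if (i : ℕ) + 2 < n + 2 then
        zchoose 2 (2 + ((i : ℕ) : ℤ) - ((j : ℕ) : ℤ))
      else if (i : ℕ) + 2 = n + 2 then
        zchoose (n + 2 + 2) (((n + 2 : ℕ) : ℤ) + 2 - (((j : ℕ) : ℤ) + 1))
      else
        zchoose (n + 2 + 2) (((n + 2 : ℕ) : ℤ) + 1 - (((j : ℕ) : ℤ) + 1))) :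
    A.det = if Even n then -((n : ℤ) + 2) ^ 2 * ((n : ℤ) + 5)
      else ((n : ℤ) + 4) ^ 2 * ((n : ℤ) + 1) := by
  classical
  -- the unimodular column-operation matrix
  set L : Matrix (Fin (n + 2)) (Fin (n + 2)) ℤ :=
    Matrix.of (fun m j : Fin (n + 2) =>
      if (m : ℕ) ≤ (j : ℕ) then
        (-1 : ℤ) ^ ((j : ℕ) + (m : ℕ)) * (((j : ℕ) : ℤ) - ((m : ℕ) : ℤ) + 1)
      else 0) with hL
  have hLtri : L.BlockTriangular id := by
    intro i j h
    have h' : (j : ℕ) < (i : ℕ) := h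
    simp only [hL, Matrix.of_apply, if_neg (Nat.not_le.mpr h')]
  have hLdet : L.det = 1 := by
    rw [Matrix.det_of_upperTriangular hLtri]
    apply Finset.prod_eq_one
    intro i _
    simp only [hL, Matrix.of_apply, if_pos le_rfl]
    have : ((-1 : ℤ)) ^ ((i : ℕ) + (i : ℕ)) = 1 := Even.neg_one_pow ⟨(i : ℕ), rfl⟩
    rw [this]; ring
  -- the product A * L
  set Nf : Fin (n + 2) → Fin (n + 2) → ℤ := fun i j =>
    if (i : ℕ) < n then (if (i : ℕ) = (j : ℕ) then 1 else 0)
    else if (i : ℕ) = n then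
      (-1 : ℤ) ^ (j : ℕ) * (((j : ℕ) : ℤ) + 2) + zchoose (n + 2) ((n : ℤ) + 1 - ((j : ℕ) : ℤ))
    else
      (-1 : ℤ) ^ (j : ℕ) * ((((j : ℕ) : ℤ) + 1) * ((n : ℤ) + 3) + ((n : ℤ) + 2))
        + zchoose (n + 2) ((n : ℤ) - ((j : ℕ) : ℤ)) with hNf
  have hML : A * L = Matrix.of Nf := by
    ext i j
    rw [Matrix.mul_apply]
    have hj1 : (j : ℕ) + 1 ≤ n + 2 := j.isLt
    by_cases hi : (i : ℕ) < n
    · -- band row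
      set f : ℕ → ℤ := fun m =>
        if m ≤ (j : ℕ) then
          (-1 : ℤ) ^ ((j : ℕ) + m) * (((j : ℕ) : ℤ) - (m : ℤ) + 1)
            * zchoose (0 + 2) ((((i : ℕ) : ℤ) + 2) - (m : ℤ))
        else 0 with hf
      have key : ∀ m : Fin (n + 2), A i m * L m j = f (m : ℕ) := by
        intro m
        rw [hA, if_pos (by omega)]
        simp only [hL, hf, Matrix.of_apply]
        by_cases hm : (m : ℕ) ≤ (j : ℕ)
        · rw [if_pos hm, if_pos hm,
            show (2 : ℤ) + ((i : ℕ) : ℤ) - ((m : ℕ) : ℤ) = (((i : ℕ) : ℤ) + 2) - ((m : ℕ) : ℤ) by ring]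
          norm_num
          ring
        · rw [if_neg hm, if_neg hm, mul_zero]
      rw [Finset.sum_congr rfl (fun m _ => key m), Fin.sum_univ_eq_sum_range f (n + 2),
        ← Finset.sum_subset (Finset.range_subset_range.mpr hj1)
          (fun m _ hm => by
            rw [hf]; exact if_neg (by simpa using Finset.mem_range.not.mp hm ∘ Nat.lt_succ_of_le))]
      rw [Finset.sum_ite_of_true
          (fun m hm => Nat.lt_succ_iff.mp (Finset.mem_range.mp hm)) _ _,
        S_eq 0 (((i : ℕ) : ℤ) + 2) (j : ℕ)]
      have E1 : zchoose (0 + 1) (((i : ℕ) : ℤ) + 2) = 0 :=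
        zchoose_eq_zero_of_lt (by push_cast; omega)
      have E2 : zchoose 0 (((i : ℕ) : ℤ) + 2 - 1) = 0 :=
        zchoose_eq_zero_of_lt (by push_cast; omega)
      rw [E1, E2, hNf]
      simp only [Matrix.of_apply, if_pos hi]
      by_cases hij : (i : ℕ) = (j : ℕ)
      · rw [if_pos hij, show ((i : ℕ) : ℤ) + 2 - ((j : ℕ) : ℤ) - 2 = 0 by omega,
          zchoose_zero_right]
        ring
      · rw [if_neg hij]
        rcases lt_or_gt_of_ne hij with h | h
        · rw [zchoose_neg 0 (show ((i : ℕ) : ℤ) + 2 - ((j : ℕ) : ℤ) - 2 < 0 by omega)]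
          ring
        · rw [zchoose_eq_zero_of_lt (show ((0 : ℕ) : ℤ) < ((i : ℕ) : ℤ) + 2 - ((j : ℕ) : ℤ) - 2 by push_cast; omega)]
          ring
    · -- last two rows
      by_cases hi2 : (i : ℕ) = n
      · -- row n
        set f : ℕ → ℤ := fun m =>
          if m ≤ (j : ℕ) then
            (-1 : ℤ) ^ ((j : ℕ) + m) * (((j : ℕ) : ℤ) - (m : ℤ) + 1)
              * zchoose (n + 2 + 2) (((n : ℤ) + 3) - (m : ℤ))
          else 0 with hf
        have key : ∀ m : Fin (n + 2), A i m * L m j = f (m : ℕ) := by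
          intro m
          rw [hA, if_neg (by omega), if_pos (by omega)]
          simp only [hL, hf, Matrix.of_apply]
          by_cases hm : (m : ℕ) ≤ (j : ℕ)
          · rw [if_pos hm, if_pos hm,
              show ((n + 2 : ℕ) : ℤ) + 2 - (((m : ℕ) : ℤ) + 1) = ((n : ℤ) + 3) - ((m : ℕ) : ℤ) by push_cast; ring]
            ring
          · rw [if_neg hm, if_neg hm, mul_zero]
        rw [Finset.sum_congr rfl (fun m _ => key m), Fin.sum_univ_eq_sum_range f (n + 2),
          ← Finset.sum_subset (Finset.range_subset_range.mpr hj1)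
            (fun m _ hm => by
              rw [hf]; exact if_neg (by simpa using Finset.mem_range.not.mp hm ∘ Nat.lt_succ_of_le)),
          Finset.sum_ite_of_true
            (fun m hm => Nat.lt_succ_iff.mp (Finset.mem_range.mp hm)) _ _,
          S_eq (n + 2) ((n : ℤ) + 3) (j : ℕ)]
        have E1 : zchoose (n + 2 + 1) ((n : ℤ) + 3) = 1 := by
          rw [show (n : ℤ) + 3 = ((n + 2 + 1 : ℕ) : ℤ) by push_cast; ring]
          exact zchoose_self _
        have E2 : zchoose (n + 2) ((n : ℤ) + 3 - 1) = 1 := by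
          rw [show (n : ℤ) + 3 - 1 = ((n + 2 : ℕ) : ℤ) by push_cast; ring]
          exact zchoose_self _
        have E3 : zchoose (n + 2) ((n : ℤ) + 3 - ((j : ℕ) : ℤ) - 2)
            = zchoose (n + 2) ((n : ℤ) + 1 - ((j : ℕ) : ℤ)) := by
          rw [show (n : ℤ) + 3 - ((j : ℕ) : ℤ) - 2 = (n : ℤ) + 1 - ((j : ℕ) : ℤ) by ring]
        rw [E1, E2, E3, hNf]
        simp only [Matrix.of_apply, if_neg hi, if_pos hi2]
        ring
      · -- row n + 1
        set f : ℕ → ℤ := fun m =>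
          if m ≤ (j : ℕ) then
            (-1 : ℤ) ^ ((j : ℕ) + m) * (((j : ℕ) : ℤ) - (m : ℤ) + 1)
              * zchoose (n + 2 + 2) (((n : ℤ) + 2) - (m : ℤ))
          else 0 with hf
        have key : ∀ m : Fin (n + 2), A i m * L m j = f (m : ℕ) := by
          intro m
          rw [hA, if_neg (by omega), if_neg (by omega)]
          simp only [hL, hf, Matrix.of_apply]
          by_cases hm : (m : ℕ) ≤ (j : ℕ)
          · rw [if_pos hm, if_pos hm,
              show ((n + 2 : ℕ) : ℤ) + 1 - (((m : ℕ) : ℤ) + 1) = ((n : ℤ) + 2) - ((m : ℕ) : ℤ) by push_cast; ring]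
            ring
          · rw [if_neg hm, if_neg hm, mul_zero]
        rw [Finset.sum_congr rfl (fun m _ => key m), Fin.sum_univ_eq_sum_range f (n + 2),
          ← Finset.sum_subset (Finset.range_subset_range.mpr hj1)
            (fun m _ hm => by
              rw [hf]; exact if_neg (by simpa using Finset.mem_range.not.mp hm ∘ Nat.lt_succ_of_le)),
          Finset.sum_ite_of_true
            (fun m hm => Nat.lt_succ_iff.mp (Finset.mem_range.mp hm)) _ _,
          S_eq (n + 2) ((n : ℤ) + 2) (j : ℕ)]
        have E1 : zchoose (n + 2 + 1) ((n : ℤ) + 2) = (n : ℤ) + 3 := by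
          rw [show (n : ℤ) + 2 = ((n + 2 : ℕ) : ℤ) by push_cast; ring]
          rw [zchoose_succ_self (n + 2)]
          push_cast; ring
        have E2 : zchoose (n + 2) ((n : ℤ) + 2 - 1) = (n : ℤ) + 2 := by
          rw [show (n : ℤ) + 2 - 1 = ((n + 1 : ℕ) : ℤ) by push_cast; ring,
            show n + 2 = (n + 1) + 1 from rfl, zchoose_succ_self (n + 1)]
          push_cast; ring
        have E3 : zchoose (n + 2) ((n : ℤ) + 2 - ((j : ℕ) : ℤ) - 2)
            = zchoose (n + 2) ((n : ℤ) - ((j : ℕ) : ℤ)) := by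
          rw [show (n : ℤ) + 2 - ((j : ℕ) : ℤ) - 2 = (n : ℤ) - ((j : ℕ) : ℤ) by ring]
        rw [E1, E2, E3, hNf]
        simp only [Matrix.of_apply, if_neg hi, if_neg hi2]
        ring
  have hdet1 : A.det = (Matrix.of Nf).det := by
    rw [← hML, Matrix.det_mul, hLdet, mul_one]
  set P : Matrix (Fin n ⊕ Fin 2) (Fin n ⊕ Fin 2) ℤ :=
    (Matrix.of Nf).submatrix finSumFinEquiv finSumFinEquiv with hP
  have hdet2 : (Matrix.of Nf).det = P.det :=
    (Matrix.det_submatrix_equiv_self finSumFinEquiv _).symm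
  set C : Matrix (Fin 2) (Fin n) ℤ := Matrix.of fun k a => P (Sum.inr k) (Sum.inl a) with hC
  set D : Matrix (Fin 2) (Fin 2) ℤ := Matrix.of fun k l => P (Sum.inr k) (Sum.inr l) with hD
  have hblocks : P = Matrix.fromBlocks 1 0 C D := by
    ext (a | k) (b | l)
    · simp only [hP, Matrix.submatrix_apply, finSumFinEquiv_apply_left, Matrix.of_apply,
        Matrix.fromBlocks_apply₁₁, hNf, Fin.coe_castAdd]
      rw [if_pos a.isLt, Matrix.one_apply]
      simp [Fin.ext_iff]
    · simp only [hP, Matrix.submatrix_apply, finSumFinEquiv_apply_left,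
        finSumFinEquiv_apply_right, Matrix.of_apply,
        Matrix.fromBlocks_apply₁₂, hNf, Fin.coe_castAdd, Fin.coe_natAdd]
      rw [if_pos a.isLt, if_neg (by omega)]
      rfl
    · rfl
    · rfl
  have hdet3 : P.det = D.det := by
    rw [hblocks, Matrix.det_fromBlocks_zero₁₂, Matrix.det_one, one_mul]
  have h00 : D 0 0 = (-1 : ℤ) ^ n * ((n : ℤ) + 2) + ((n : ℤ) + 2) := by
    simp only [hD, hP, Matrix.of_apply, Matrix.submatrix_apply, finSumFinEquiv_apply_right,
      hNf, Fin.coe_natAdd, Fin.val_zero, Nat.add_zero]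
    rw [if_neg (lt_irrefl n), if_true, show (n : ℤ) + 1 - (n : ℤ) = 1 by ring, zchoose_one_right]
    push_cast; ring
  have h01 : D 0 1 = (-1 : ℤ) ^ (n + 1) * ((n : ℤ) + 3) + 1 := by
    simp only [hD, hP, Matrix.of_apply, Matrix.submatrix_apply, finSumFinEquiv_apply_right,
      hNf, Fin.coe_natAdd, Fin.val_zero, Fin.val_one, Nat.add_zero]
    rw [if_neg (lt_irrefl n), if_true, show (n : ℤ) + 1 - ((n + 1 : ℕ) : ℤ) = 0 by push_cast; ring, zchoose_zero_right]
    push_cast; ring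
  have h10 : D 1 0 = (-1 : ℤ) ^ n * (((n : ℤ) + 1) * ((n : ℤ) + 3) + ((n : ℤ) + 2)) + 1 := by
    simp only [hD, hP, Matrix.of_apply, Matrix.submatrix_apply, finSumFinEquiv_apply_right,
      hNf, Fin.coe_natAdd, Fin.val_zero, Fin.val_one, Nat.add_zero]
    rw [if_neg (by omega), if_neg (by omega),
      show (n : ℤ) - (n : ℤ) = 0 by ring, zchoose_zero_right]
  have h11 : D 1 1 = (-1 : ℤ) ^ (n + 1) * (((n : ℤ) + 2) * ((n : ℤ) + 3) + ((n : ℤ) + 2)) := by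
    simp only [hD, hP, Matrix.of_apply, Matrix.submatrix_apply, finSumFinEquiv_apply_right,
      hNf, Fin.coe_natAdd, Fin.val_one]
    rw [if_neg (by omega), if_neg (by omega),
      zchoose_neg (n + 2) (show (n : ℤ) - ((n + 1 : ℕ) : ℤ) < 0 by push_cast; omega)]
    push_cast; ring
  rw [hdet1, hdet2, hdet3, Matrix.det_fin_two, h00, h01, h10, h11]
  rcases Nat.even_or_odd n with he | ho
  · rw [if_pos he, he.neg_one_pow, (he.add_one).neg_one_pow]
    ring
  · rw [if_neg (by simpa using ho), ho.neg_one_pow, (ho.add_one).neg_one_pow]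
    ring

end aux


/-- The determinant of the matrix associated to the parameters `α = β = γ = 2`,
i.e. to the ideal `(x^{t+2}, y^{t+2}, z^{t+2}, x²y²z²)`:
rows `1, …, t-2` (1-based) have entries `binom(2, 2+i-j)`, row `t-1` has entries
`binom(t+2, t+2-j)`, and row `t` has entries `binom(t+2, t+1-j)`.  Its
determinant is `-t²(t+3)` if `t` is even and `(t+2)²(t-1)` if `t` is odd. -/
theorem det_abg_two (t : ℕ) (ht : 2 ≤ t) :
    (Matrix.of fun i j : Fin t =>
        if (i : ℕ) + 2 < t then
          zchoose 2 (2 + (i : ℤ) - (j : ℤ))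
        else if (i : ℕ) + 2 = t then
          zchoose (t + 2) ((t : ℤ) + 2 - ((j : ℤ) + 1))
        else
          zchoose (t + 2) ((t : ℤ) + 1 - ((j : ℤ) + 1))).det
      = if Even t then -(t : ℤ) ^ 2 * (t + 3) else ((t : ℤ) + 2) ^ 2 * (t - 1) := by
  obtain ⟨n, rfl⟩ : ∃ n : ℕ, t = n + 2 := ⟨t - 2, by omega⟩
  refine (aux n _ (fun i j => ?_)).trans ?_
  · rfl
  · have hpar : Even (n + 2) ↔ Even n := by simp [Nat.even_add]
    rcases Nat.even_or_odd n with he | ho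
    · rw [if_pos he, if_pos (hpar.mpr he)]
      push_cast; ring
    · rw [if_neg (by simpa using ho), if_neg (by rw [hpar]; simpa using ho)]
      push_cast; ring
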